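/- arXiv:0910.2825 — 2 statements merged into one kernel-verified Lean document; each statement's English description precedes it below -/
import Mathlib

section
/- Let ⟨·|·⟩ be a compatibility support mapping for S and define D(X,A) = ⟨X|{1}⟩ ⊖ ⟨X|A∖X⟩ for finite X ⊆ A ⊆ S. Then for X ⊆ A and c ∈ S with c ∉ A, the sum D(X, A∪{c}) ⊕ D(X∪{c}, A∪{c}) is defined and equals D(X,A). -/
universe u

/-- An effect algebra: a partial commutative, associative operation `add`
(modelled as an `Option`-valued total operation), with constants `zero`, `one`,
unique orthosupplements, and `a ⊕ 1` defined only for `a = 0`. -/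
structure EffectAlgebra (α : Type u) where
  add : α → α → Option α
  zero : α
  one : α
  add_comm : ∀ a b : α, add a b = add b a
  add_assoc : ∀ a b c ab abc : α, add a b = some ab → add ab c = some abc →
    ∃ bc : α, add b c = some bc ∧ add a bc = some abc
  orthosupp : ∀ a : α, ∃! a' : α, add a a' = some one
  add_one : ∀ a b : α, add a one = some b → a = zero

namespace EffectAlgebra

variable {α : Type u}

/-- The induced order: `a ≤ b` iff `∃ c, a ⊕ c = b`. -/
def le (E : EffectAlgebra α) (a b : α) : Prop := ∃ c, E.add a c = some b

/-- The orthosupplement `a'`. -/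
noncomputable def compl (E : EffectAlgebra α) (a : α) : α :=
  (E.orthosupp a).exists.choose

open Classical in
/-- The partial difference `b ⊖ a` (junk value `0` when `a ≤ b` fails). -/
noncomputable def sub (E : EffectAlgebra α) (b a : α) : α :=
  if h : ∃ c, E.add a c = some b then h.choose else E.zero

/-- Iterated partial sum of a list of elements. -/
noncomputable def osum (E : EffectAlgebra α) : List α → Option α
  | [] => some E.zero
  | a :: l => (E.osum l).bind fun s => E.add a s

end EffectAlgebra

namespace EffectAlgebra

variable {α : Type u}

/-- `f` is a compatibility support mapping for `S` (with `1 ∈ S`). -/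
def IsCSM [DecidableEq α] (E : EffectAlgebra α) (S : Set α) (f : Finset α → Finset α → α) : Prop :=
  E.one ∈ S ∧
  (∀ U V₁ V₂ : Finset α, ↑U ⊆ S → ↑V₁ ⊆ S → ↑V₂ ⊆ S → V₁ ⊆ V₂ →
    E.le (f U V₁) (f U V₂)) ∧
  (∀ U V : Finset α, ↑U ⊆ S → ↑V ⊆ S → E.le (f U V) (f U {E.one})) ∧
  (∀ U : Finset α, ↑U ⊆ S → f U ∅ = E.zero) ∧
  (∀ c ∈ S, f ∅ {c} = c) ∧
  (∀ (U V : Finset α) (c : α), ↑U ⊆ S → ↑V ⊆ S → c ∈ S → c ∉ U → c ∉ V →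
    E.sub (f (insert c U) {E.one}) (f (insert c U) V) =
      E.sub (f U (insert c V)) (f U V))

/-- `f` is a strong compatibility support mapping for `S`:
condition (e*) holds with no restriction on `c`. -/
def IsStrongCSM [DecidableEq α] (E : EffectAlgebra α) (S : Set α) (f : Finset α → Finset α → α) : Prop :=
  E.one ∈ S ∧
  (∀ U V₁ V₂ : Finset α, ↑U ⊆ S → ↑V₁ ⊆ S → ↑V₂ ⊆ S → V₁ ⊆ V₂ →
    E.le (f U V₁) (f U V₂)) ∧
  (∀ U V : Finset α, ↑U ⊆ S → ↑V ⊆ S → E.le (f U V) (f U {E.one})) ∧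
  (∀ U : Finset α, ↑U ⊆ S → f U ∅ = E.zero) ∧
  (∀ c ∈ S, f ∅ {c} = c) ∧
  (∀ (U V : Finset α) (c : α), ↑U ⊆ S → ↑V ⊆ S → c ∈ S →
    E.sub (f (insert c U) {E.one}) (f (insert c U) V) =
      E.sub (f U (insert c V)) (f U V))

/-- `D(X,A) = ⟨X|{1}⟩ ⊖ ⟨X|A∖X⟩`. -/
noncomputable def Dmap [DecidableEq α] (E : EffectAlgebra α)
    (f : Finset α → Finset α → α) (X A : Finset α) : α :=
  E.sub (f X {E.one}) (f X (A \ X))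

end EffectAlgebra


namespace EffectAlgebra

variable {α : Type u}

theorem cancel (E : EffectAlgebra α) {a b c d : α}
    (h1 : E.add a b = some d) (h2 : E.add a c = some d) : b = c := by
  obtain ⟨d', hd'⟩ := (E.orthosupp d).exists
  have h1' : E.add b a = some d := by rw [E.add_comm]; exact h1
  have h2' : E.add c a = some d := by rw [E.add_comm]; exact h2
  obtain ⟨p, hp1, hp2⟩ := E.add_assoc b a d' d E.one h1' hd'
  obtain ⟨q, hq1, hq2⟩ := E.add_assoc c a d' d E.one h2' hd'
  have hpq : p = q := by rw [hp1] at hq1; exact Option.some.inj hq1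
  obtain ⟨y, hy, hyu⟩ := E.orthosupp p
  have hb : E.add p b = some E.one := by rw [E.add_comm]; exact hp2
  have hc : E.add p c = some E.one := by rw [E.add_comm, hpq]; exact hq2
  exact (hyu b hb).trans (hyu c hc).symm

theorem sub_eq (E : EffectAlgebra α) {a b c : α} (h : E.add a c = some b) :
    E.sub b a = c := by
  have hex : ∃ x, E.add a x = some b := ⟨c, h⟩
  rw [sub, dif_pos hex]
  exact E.cancel hex.choose_spec h

theorem sub_add_sub (E : EffectAlgebra α) {a b t : α}
    (hab : E.le a b) (hbt : E.le b t) :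
    E.add (E.sub t b) (E.sub b a) = some (E.sub t a) := by
  obtain ⟨q, hq⟩ := hab
  obtain ⟨p, hp⟩ := hbt
  obtain ⟨qp, hqp1, hqp2⟩ := E.add_assoc a q p b t hq hp
  rw [E.sub_eq hq, E.sub_eq hp, E.sub_eq hqp2, E.add_comm]
  exact hqp1

end EffectAlgebra

/-- `D(X, A∪{c}) ⊕ D(X∪{c}, A∪{c})` is defined and equals `D(X,A)`. -/
theorem csm_D_split {α : Type u} [DecidableEq α] (E : EffectAlgebra α)
    (S : Set α) (f : Finset α → Finset α → α) (hf : E.IsCSM S f)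
    (X A : Finset α) (hA : ↑A ⊆ S) (hXA : X ⊆ A)
    (c : α) (hc : c ∈ S) (hcA : c ∉ A) :
    E.add (E.Dmap f X (insert c A)) (E.Dmap f (insert c X) (insert c A)) =
      some (E.Dmap f X A) := by

  obtain ⟨h1, hmono, htop, -, -, he⟩ := hf
  have hXS : ↑X ⊆ S := fun x hx => hA (hXA hx)
  have hcX : c ∉ X := fun h => hcA (hXA h)
  have hcAX : c ∉ A \ X := fun h => hcA (Finset.mem_sdiff.mp h).1
  have hAXS : ↑(A \ X) ⊆ S := fun x hx => hA (Finset.mem_sdiff.mp (by exact_mod_cast hx)).1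
  have hiS : ↑(insert c (A \ X)) ⊆ S := by
    intro x hx
    rcases Finset.mem_insert.mp (by exact_mod_cast hx) with h | h
    · exact h ▸ hc
    · exact hAXS h
  have e1 : insert c A \ X = insert c (A \ X) := by
    ext x; simp only [Finset.mem_sdiff, Finset.mem_insert]
    constructor
    · rintro ⟨h | h, hx⟩
      · exact Or.inl h
      · exact Or.inr ⟨h, hx⟩
    · rintro (h | ⟨h, hx⟩)
      · exact ⟨Or.inl h, h ▸ hcX⟩
      · exact ⟨Or.inr h, hx⟩
  have e2 : insert c A \ insert c X = A \ X := by
    ext x; simp only [Finset.mem_sdiff, Finset.mem_insert]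
    constructor
    · rintro ⟨h | h, hx⟩
      · exact absurd (Or.inl h) hx
      · exact ⟨h, fun hx' => hx (Or.inr hx')⟩
    · rintro ⟨h, hx⟩
      exact ⟨Or.inr h, fun h' => h'.elim (fun h'' => hcA (h'' ▸ h)) hx⟩
  unfold EffectAlgebra.Dmap
  rw [e1, e2, he X (A \ X) c hXS hAXS hc hcX hcAX]
  exact E.sub_add_sub
    (hmono X (A \ X) (insert c (A \ X)) hXS hAXS hiS (Finset.subset_insert _ _))
    (htop X (insert c (A \ X)) hXS hiS)
end

section
/- Let ⟨·|·⟩ be a strong compatibility support mapping for S. If finite sets U, V ⊆ S are not disjoint, then ⟨U|V⟩ = ⟨U|{1}⟩. -/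
universe u

namespace EffectAlgebra

lemma add_zero'' {α : Type u} (E : EffectAlgebra α) (a : α) : E.add a E.zero = some a := by
  obtain ⟨o, ho, _⟩ := E.orthosupp E.one
  have h0 : o = E.zero := E.add_one o E.one (by rw [E.add_comm]; exact ho)
  have h1 : E.add E.one E.zero = some E.one := h0 ▸ ho
  obtain ⟨a', ha', _⟩ := E.orthosupp a
  have ha'a : E.add a' a = some E.one := by rw [E.add_comm]; exact ha'
  obtain ⟨bc, hbc, hbc2⟩ := E.add_assoc a' a E.zero E.one E.one ha'a h1
  obtain ⟨a'', _, huniq'⟩ := E.orthosupp a'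
  have hba : bc = a := (huniq' bc hbc2).trans (huniq' a ha'a).symm
  rw [hba] at hbc; exact hbc

end EffectAlgebra

/-- For a strong compatibility support mapping, if `U` and `V` are not
disjoint then `⟨U|V⟩ = ⟨U|{1}⟩`. -/
theorem strongCSM_nondisjoint {α : Type u} [DecidableEq α] (E : EffectAlgebra α)
    (S : Set α) (f : Finset α → Finset α → α) (hf : E.IsStrongCSM S f)
    (U V : Finset α) (hU : ↑U ⊆ S) (hV : ↑V ⊆ S)
    (h : ¬ Disjoint U V) : f U V = f U {E.one} := by
  obtain ⟨h1S, hmono, hle1, hemp, hsing, hstar⟩ := hf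
  obtain ⟨c, hcU, hcV⟩ := Finset.not_disjoint_iff.mp h
  have hs := hstar U V c hU hV (hU hcU)
  rw [Finset.insert_eq_self.2 hcU, Finset.insert_eq_self.2 hcV] at hs
  have hex1 : ∃ x, E.add (f U V) x = some (f U {E.one}) := hle1 U V hU hV
  have hex2 : ∃ x, E.add (f U V) x = some (f U V) := ⟨E.zero, E.add_zero'' _⟩
  unfold EffectAlgebra.sub at hs
  rw [dif_pos hex1, dif_pos hex2] at hs
  have h1 := hex1.choose_spec
  have h2 := hex2.choose_spec
  rw [hs, h2] at h1
  exact Option.some.inj h1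
end
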